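/- arXiv:1403.3604 — 6 statements merged into one kernel-verified Lean document; each statement's English description precedes it below -/
import Mathlib

section
/- Let A be a commutative ring and σ : A → A a ring involution (a ring homomorphism with σ ∘ σ = id). Let I_A be the ideal of A generated by the set {a − σ(a) : a ∈ A}. Then the ideal I_A² is generated by σ-fixed elements: every element (a − σ(a))·(b − σ(b)) with a, b ∈ A is fixed by σ, and consequently I_A² equals the ideal of A generated by the subset {x ∈ I_A² : σ(x) = x} = I_A² ∩ A^σ. -/
/-- The ideal `I_A` of `A` generated by `{a - σ a : a ∈ A}`. -/
def iideal {A : Type*} [CommRing A] (σ : A →+* A) : Ideal A :=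
  Ideal.span (Set.range fun a => a - σ a)

/-- If `σ` is a ring involution of a commutative ring `A` and `I_A` is the ideal generated by
`{a - σ a : a ∈ A}`, then every element `(a - σ a) * (b - σ b)` is fixed by `σ`, and
consequently `I_A ^ 2` is generated by its `σ`-fixed elements. -/
theorem squared_involution_ideal_generated_by_fixed_elements
    {A : Type*} [CommRing A] (σ : A →+* A) (hσ : ∀ a : A, σ (σ a) = a) :
    (∀ a b : A, σ ((a - σ a) * (b - σ b)) = (a - σ a) * (b - σ b)) ∧
      (iideal σ) ^ 2 = Ideal.span {x : A | x ∈ (iideal σ) ^ 2 ∧ σ x = x} := by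
  have hfix : ∀ a b : A, σ ((a - σ a) * (b - σ b)) = (a - σ a) * (b - σ b) := by
    intro a b
    rw [map_mul, map_sub, map_sub, hσ, hσ]
    ring
  refine ⟨hfix, le_antisymm ?_ ?_⟩
  · conv_lhs => rw [pow_two, iideal, Ideal.span_mul_span]
    apply Ideal.span_le.2
    rintro x hx
    obtain ⟨u, ⟨a, rfl⟩, v, ⟨b, rfl⟩, rfl⟩ := hx
    refine Ideal.subset_span ⟨?_, hfix a b⟩
    rw [pow_two]
    exact Ideal.mul_mem_mul (Ideal.subset_span ⟨a, rfl⟩) (Ideal.subset_span ⟨b, rfl⟩)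
  · exact Ideal.span_le.2 fun x hx => hx.1
end

section
/- Let (A, σ_A) and (B, σ_B) be commutative rings with ring involutions, and let f : A → B be an equivariant ring homomorphism (f ∘ σ_A = σ_B ∘ f). Then the canonical ring homomorphism μ : B^{σ_B} ⊗_{A^{σ_A}} A → B, b ⊗ a ↦ b·f(a), is surjective if and only if the B^{σ_B}-submodule of B generated by f(L_A) = {f(a) − f(σ_A(a)) : a ∈ A} contains L_B = {b − σ_B(b) : b ∈ B} (equivalently, the map λ_f : B^{σ_B} ⊗_{A^{σ_A}} L_A → L_B is surjective). -/
/-- The fixed subring `A^σ` of a ring involution `σ`. -/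
def fixedSubring {A : Type*} [CommRing A] (σ : A →+* A) : Subring A where
  carrier := {a | σ a = a}
  mul_mem' := fun {a b} ha hb => by
    simp only [Set.mem_setOf_eq] at *; rw [map_mul, ha, hb]
  one_mem' := by simp only [Set.mem_setOf_eq, map_one]
  add_mem' := fun {a b} ha hb => by
    simp only [Set.mem_setOf_eq] at *; rw [map_add, ha, hb]
  zero_mem' := by simp only [Set.mem_setOf_eq, map_zero]
  neg_mem' := fun {a} ha => by
    simp only [Set.mem_setOf_eq] at *; rw [map_neg, ha]

/-- `L_A = {a - σ a : a ∈ A}` as an `A^σ`-submodule of `A`. -/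
def lsub {A : Type*} [CommRing A] (σ : A →+* A) : Submodule (fixedSubring σ) A where
  carrier := Set.range fun a => a - σ a
  add_mem' := by
    rintro _ _ ⟨a, rfl⟩ ⟨b, rfl⟩
    exact ⟨a + b, by simp only []; rw [map_add]; ring⟩
  zero_mem' := ⟨0, by simp⟩
  smul_mem' := by
    rintro ⟨c, hc⟩ _ ⟨a, rfl⟩
    refine ⟨c * a, ?_⟩
    have hc' : σ c = c := hc
    show c * a - σ (c * a) = c • (a - σ a)
    rw [map_mul, hc']
    show c * a - c * σ a = c * (a - σ a)
    ring

section Equivariant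

variable {A B : Type*} [CommRing A] [CommRing B]

/-- An equivariant ring homomorphism restricts to a homomorphism of fixed subrings. -/
def fixedHom (σA : A →+* A) (σB : B →+* B) (f : A →+* B)
    (hf : ∀ a : A, f (σA a) = σB (f a)) : fixedSubring σA →+* fixedSubring σB where
  toFun a := ⟨f a, by
    have h : σA (a : A) = a := a.2
    show σB (f a) = f a
    rw [← hf, h]⟩
  map_one' := Subtype.ext (by simp)
  map_mul' x y := Subtype.ext (by simp)
  map_zero' := Subtype.ext (by simp)
  map_add' x y := Subtype.ext (by simp)

/-- The additive bilinear pairing `(b, a) ↦ b * f a` underlying the map `μ`. -/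
def muBil (σB : B →+* B) (f : A →+* B) : fixedSubring σB →+ A →+ B where
  toFun b := (AddMonoidHom.mulLeft (b : B)).comp f.toAddMonoidHom
  map_zero' := by ext a; simp
  map_add' b c := by ext a; simp [add_mul]

/-- The canonical map `μ : B^{σ_B} ⊗_{A^{σ_A}} A → B`, `b ⊗ a ↦ b * f a`, where
`B^{σ_B}` is an `A^{σ_A}`-module via the restriction of `f` to the fixed subrings. -/
noncomputable def muMap (σA : A →+* A) (σB : B →+* B) (f : A →+* B)
    (hf : ∀ a : A, f (σA a) = σB (f a)) :
    (@TensorProduct (fixedSubring σA) _ (fixedSubring σB) A _ _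
      (Module.compHom (fixedSubring σB) (fixedHom σA σB f hf)) _) →+ B :=
  letI : Module (fixedSubring σA) (fixedSubring σB) :=
    Module.compHom (fixedSubring σB) (fixedHom σA σB f hf)
  TensorProduct.liftAddHom (muBil σB f) (by
    rintro r b a
    show ((fixedHom σA σB f hf r * b : fixedSubring σB) : B) * f a = (b : B) * f ((r : A) * a)
    show (f (r : A) * (b : B)) * f a = (b : B) * f ((r : A) * a)
    rw [map_mul]
    ring)

/-- The additive bilinear pairing `(b, x) ↦ b * f x` underlying the map `λ_f`,
with values in `L_B`. -/
def lamBil (σA : A →+* A) (σB : B →+* B) (f : A →+* B)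
    (hf : ∀ a : A, f (σA a) = σB (f a)) : fixedSubring σB →+ lsub σA →+ lsub σB where
  toFun b :=
    { toFun := fun x => ⟨(b : B) * f (x : A), by
        obtain ⟨a, ha⟩ := x.2
        have hb : σB (b : B) = (b : B) := b.2
        refine ⟨(b : B) * f a, ?_⟩
        simp only []
        rw [← ha, map_sub, hf, map_mul, hb]
        ring⟩
      map_zero' := Subtype.ext (by simp)
      map_add' := fun x y => Subtype.ext (by
        show (b : B) * f ((x : A) + (y : A)) = (b : B) * f (x : A) + (b : B) * f (y : A)
        rw [map_add, mul_add]) }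
  map_zero' := by
    ext x
    show ((0 : fixedSubring σB) : B) * f (x : A) = ((0 : lsub σB) : B)
    simp
  map_add' b c := by
    ext x
    show ((b + c : fixedSubring σB) : B) * f (x : A) = _
    simp only [Subring.coe_add, add_mul]
    rfl

/-- The canonical map `λ_f : B^{σ_B} ⊗_{A^{σ_A}} L_A → L_B`, `b ⊗ x ↦ b * f x`. -/
noncomputable def lamMap (σA : A →+* A) (σB : B →+* B) (f : A →+* B)
    (hf : ∀ a : A, f (σA a) = σB (f a)) :
    (@TensorProduct (fixedSubring σA) _ (fixedSubring σB) (lsub σA) _ _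
      (Module.compHom (fixedSubring σB) (fixedHom σA σB f hf)) _) →+ lsub σB :=
  letI : Module (fixedSubring σA) (fixedSubring σB) :=
    Module.compHom (fixedSubring σB) (fixedHom σA σB f hf)
  TensorProduct.liftAddHom (lamBil σA σB f hf) (by
    rintro r b x
    apply Subtype.ext
    show (f (r : A) * (b : B)) * f (x : A) = (b : B) * f ((r : A) * (x : A))
    rw [map_mul]
    ring)

end Equivariant

set_option maxHeartbeats 2000000 in
set_option synthInstance.maxHeartbeats 400000 in
/-- For an equivariant ring homomorphism `f : (A, σ_A) → (B, σ_B)`, the canonical map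
`μ : B^{σ_B} ⊗_{A^{σ_A}} A → B` is surjective if and only if the `B^{σ_B}`-submodule of `B`
generated by `f(L_A)` contains `L_B`. -/
theorem muMap_surjective_iff_span_image_L_le
    {A B : Type*} [CommRing A] [CommRing B]
    (σA : A →+* A) (hσA : ∀ a : A, σA (σA a) = a)
    (σB : B →+* B) (hσB : ∀ b : B, σB (σB b) = b)
    (f : A →+* B) (hf : ∀ a : A, f (σA a) = σB (f a)) :
    Function.Surjective (muMap σA σB f hf) ↔
      lsub σB ≤ Submodule.span (fixedSubring σB) (⇑f '' (lsub σA : Set A)) := by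
  
  letI : Module (fixedSubring σA) (fixedSubring σB) :=
    Module.compHom (fixedSubring σB) (fixedHom σA σB f hf)
  set μ := muMap σA σB f hf with hμdef
  have hmu_tmul : ∀ (b : fixedSubring σB) (a : A), μ (b ⊗ₜ a) = (b : B) * f a := by
    intro b a
    simp [hμdef, muMap, muBil, TensorProduct.liftAddHom_tmul]
  -- the range of μ as a submodule over the fixed subring
  have hRsmul : ∀ (c : fixedSubring σB) t, ∃ t', μ t' = (c : B) * μ t := by
    intro c t
    induction t using TensorProduct.induction_on with
    | zero => exact ⟨0, by simp⟩
    | tmul b a =>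
        refine ⟨(c * b) ⊗ₜ a, ?_⟩
        rw [hmu_tmul, hmu_tmul]
        push_cast
        ring
    | add x y hx hy =>
        obtain ⟨tx, htx⟩ := hx
        obtain ⟨ty, hty⟩ := hy
        exact ⟨tx + ty, by rw [map_add, map_add, htx, hty, mul_add]⟩
  set Rμ : Submodule (fixedSubring σB) B :=
    { carrier := Set.range μ
      add_mem' := by
        rintro _ _ ⟨x, rfl⟩ ⟨y, rfl⟩
        exact ⟨x + y, map_add μ x y⟩
      zero_mem' := ⟨0, map_zero μ⟩
      smul_mem' := by
        rintro c _ ⟨t, rfl⟩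
        obtain ⟨t', ht'⟩ := hRsmul c t
        exact ⟨t', ht'⟩ } with hRμdef
  have hfixed_mem : ∀ c : fixedSubring σB, (c : B) ∈ Rμ := fun c =>
    ⟨c ⊗ₜ 1, by rw [hmu_tmul, map_one, mul_one]⟩
  constructor
  · -- surjective → L_B ⊆ span f(L_A)
    intro hsurj
    have key : ∀ t, μ t - σB (μ t) ∈
        Submodule.span (fixedSubring σB) (⇑f '' (lsub σA : Set A)) := by
      intro t
      induction t using TensorProduct.induction_on with
      | zero => simp
      | tmul b a =>
          have hb : σB (b : B) = (b : B) := b.2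
          have h1 : μ (b ⊗ₜ a) - σB (μ (b ⊗ₜ a)) = b • (f (a - σA a)) := by
            rw [hmu_tmul, map_mul, hb, ← hf, map_sub]
            show (b : B) * f a - (b : B) * f (σA a) = (b : B) * (f a - f (σA a))
            ring
          rw [h1]
          exact Submodule.smul_mem _ b
            (Submodule.subset_span ⟨a - σA a, ⟨a, rfl⟩, rfl⟩)
      | add x y hx hy =>
          have h1 : μ (x + y) - σB (μ (x + y)) =
              (μ x - σB (μ x)) + (μ y - σB (μ y)) := by
            rw [map_add, map_add]; ring
          rw [h1]
          exact Submodule.add_mem _ hx hy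
    rintro _ ⟨b0, rfl⟩
    obtain ⟨t, ht⟩ := hsurj b0
    have := key t
    rwa [ht] at this
  · -- L_B ⊆ span f(L_A) → surjective
    intro hle b
    have hd : b - σB b ∈
        Submodule.span (fixedSubring σB) (⇑f '' (lsub σA : Set A)) :=
      hle ⟨b, rfl⟩
    have key : ∀ d ∈ Submodule.span (fixedSubring σB) (⇑f '' (lsub σA : Set A)),
        ∃ s : B, s ∈ Rμ ∧ s - σB s = d := by
      intro d hdmem
      induction hdmem using Submodule.span_induction with
      | mem y hy =>
          obtain ⟨x, hxL, hxy⟩ := hy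
          obtain ⟨a, ha⟩ := hxL
          refine ⟨f a, ⟨(1 : fixedSubring σB) ⊗ₜ a, by rw [hmu_tmul]; simp⟩, ?_⟩
          rw [← hxy, ← ha]
          show f a - σB (f a) = f (a - σA a)
          rw [map_sub, hf]
      | zero => exact ⟨0, Rμ.zero_mem, by simp⟩
      | add x y hx hy ihx ihy =>
          obtain ⟨s, hsR, hs⟩ := ihx
          obtain ⟨u, huR, hu⟩ := ihy
          refine ⟨s + u, Rμ.add_mem hsR huR, ?_⟩
          rw [map_add, ← hs, ← hu]; ring
      | smul c y hy ih =>
          obtain ⟨s, hsR, hs⟩ := ih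
          have hc : σB (c : B) = (c : B) := c.2
          refine ⟨c • s, Rμ.smul_mem c hsR, ?_⟩
          show (c : B) * s - σB ((c : B) * s) = (c : B) * y
          rw [map_mul, hc, ← hs]
          ring
    obtain ⟨s, ⟨t0, ht0⟩, hs⟩ := key _ hd
    have hfix : (b - s) ∈ fixedSubring σB := by
      show σB (b - s) = b - s
      rw [map_sub]
      have h1 : σB b = b - (b - σB b) := by ring
      have h2 : σB s = s - (b - σB b) := by rw [← hs]; ring
      rw [h1, h2]; ring
    obtain ⟨t1, ht1⟩ := hfixed_mem ⟨b - s, hfix⟩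
    exact ⟨t1 + t0, by rw [map_add, ht1, ht0]; ring⟩
end

section
/- Let k be a field, let (A, σ_A) and (B, σ_B) be finitely generated commutative k-algebras equipped with k-algebra involutions, and let f : A → B be an equivariant k-algebra homomorphism (f ∘ σ_A = σ_B ∘ f). Let I_B be the ideal of B generated by L_B = {b − σ_B(b) : b ∈ B}. Assume: (1) I_B is an invertible ideal of B (a finitely generated projective B-module of rank one), and (2) I_B equals the ideal of B generated by f(L_A) = {f(a) − f(σ_A(a)) : a ∈ A}. Then the B^{σ_B}-submodule of B generated by f(L_A) equals the B^{σ_B}-submodule generated by L_B; in other words, the map λ_f : B^{σ_B} ⊗_{A^{σ_A}} L_A → L_B is surjective. -/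
/-- An ideal is invertible if it is a finitely generated projective module of rank one. -/
def IsInvertibleIdeal {A : Type*} [CommRing A] (I : Ideal A) : Prop :=
  Module.Finite A I ∧ Module.Projective A I ∧
    ∀ p : PrimeSpectrum A, Module.rankAtStalk (R := A) I p = 1

/-! The inclusion `f(L_A) ⊆ L_B` is formal. For the converse, membership in the `B^σ`-span of
`Z = f(L_A)` can be tested at the maximal ideals of `B^σ`, each of which lies under a prime `Q`
of `B`, since `b` is a root of `(X - b)(X - σ b) ∈ B^σ[X]`. Off the fixed locus (`I_B ⊄ Q`) some
`z ∈ Z` lies outside `Q`, and `z² x = (z x) z` with `z²` and `z x` fixed. On the fixed locus,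
`I_B` is invertible and generated by `Z`, so some `z ∈ Z` generates `I_B` freely near `Q`.
Writing `w x = c z` with `w ∉ Q` and comparing with its conjugate shows that `c σ(w)` is fixed
up to the annihilator of `z`; multiplying by norms `v σ(v)` then gives `s x = r z` with `s ∉ Q`
and `s, r` fixed. Surjectivity of `λ_f` is a reformulation of the resulting equality of spans. -/

theorem Submodule.mem_of_forall_isMaximal_exists_smul_mem {R M : Type*} [CommRing R]
    [AddCommGroup M] [Module R M] {N : Submodule R M} {x : M}
    (h : ∀ P : Ideal R, P.IsMaximal → ∃ s ∉ P, s • x ∈ N) : x ∈ N := by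
  by_contra hx
  obtain ⟨P, hP, hle⟩ := Ideal.exists_le_maximal (N.colon {x})
    fun htop => hx (by simpa using (N.colon_eq_top_iff_subset {x}).mp htop)
  obtain ⟨s, hsP, hs⟩ := h P hP
  exact hsP (hle (mem_colon_singleton.mpr hs))

theorem IsLocalRing.exists_mem_bijective_toSpanSingleton {R M : Type*} [CommRing R]
    [IsLocalRing R] [AddCommGroup M] [Module R M] [Module.Free R M] [Module.Finite R M]
    (hM : Module.finrank R M = 1) {S : Set M} (hS : Submodule.span R S = ⊤) :
    ∃ z ∈ S, Function.Bijective (LinearMap.toSpanSingleton R M z) := by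
  let e : M ≃ₗ[R] R :=
    (Module.finBasisOfFinrankEq R M hM).equivFun.trans (LinearEquiv.funUnique (Fin 1) R R)
  obtain ⟨z, hzS, hz⟩ : ∃ z ∈ S, IsUnit (e z) := by
    by_contra! h
    have hspan : Ideal.span (e '' S) = ⊤ := by
      rw [Ideal.span, ← LinearEquiv.coe_coe, Submodule.span_image, hS, Submodule.map_top,
        LinearEquiv.range]
    refine (maximalIdeal.isMaximal R).ne_top (top_le_iff.mp (hspan ▸ Ideal.span_le.mpr ?_))
    rintro _ ⟨z, hz, rfl⟩
    exact h z hz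
  refine ⟨z, hzS, ?_⟩
  have : LinearMap.toSpanSingleton R M z = e.symm.toLinearMap ∘ₗ LinearMap.mulRight R (e z) := by
    ext; simp
  rw [this]
  exact e.symm.bijective.comp (Units.mulRight_bijective hz.unit)

namespace LocalizedModule

variable {R M : Type*} [CommRing R] [AddCommGroup M] [Module R M] {S : Submonoid R} {z : M}

theorem exists_smul_eq_smul_of_surjective
    (h : Function.Surjective
      (LinearMap.toSpanSingleton (Localization S) (LocalizedModule S M) (mk z 1)))
    (y : M) : ∃ w ∈ S, ∃ c : R, w • y = c • z := by
  obtain ⟨d, hd⟩ := h (mk y 1)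
  induction d using Localization.induction_on with | H p => ?_
  obtain ⟨c, w⟩ := p
  rw [LinearMap.toSpanSingleton_apply, mk_smul_mk, mul_one, mk_eq] at hd
  obtain ⟨u, hu⟩ := hd
  refine ⟨u * w, (u * w).2, u * c, ?_⟩
  simpa [Submonoid.smul_def, mul_smul] using hu.symm

theorem exists_mul_eq_zero_of_injective
    (h : Function.Injective
      (LinearMap.toSpanSingleton (Localization S) (LocalizedModule S M) (mk z 1)))
    {b : R} (hb : b • z = 0) : ∃ w ∈ S, w * b = 0 := by
  have : algebraMap R (Localization S) b = 0 := by
    refine h ?_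
    rw [LinearMap.toSpanSingleton_apply, LinearMap.toSpanSingleton_apply, algebraMap_smul,
      smul'_mk, hb, zero_smul, zero_mk]
  obtain ⟨w, hw⟩ := (IsLocalization.map_eq_zero_iff S _ b).mp this
  exact ⟨w, w.2, hw⟩

end LocalizedModule

theorem Module.exists_mem_bijective_toSpanSingleton_localizedModule {R M : Type*} [CommRing R]
    [AddCommGroup M] [Module R M] [Module.Finite R M] [Module.Projective R M]
    (p : PrimeSpectrum R) (hp : Module.rankAtStalk M p = 1)
    {S : Set M} (hS : Submodule.span R S = ⊤) :
    ∃ z ∈ S, Function.Bijective (LinearMap.toSpanSingleton (Localization.AtPrime p.asIdeal)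
      (LocalizedModule p.asIdeal.primeCompl M) (LocalizedModule.mk z 1)) := by
  have : Module.Free (Localization.AtPrime p.asIdeal) (LocalizedModule p.asIdeal.primeCompl M) :=
    Module.free_of_flat_of_isLocalRing
  obtain ⟨_, ⟨z, hzS, rfl⟩, hz⟩ := IsLocalRing.exists_mem_bijective_toSpanSingleton hp
    (span_eq_top_of_isLocalizedModule _ p.asIdeal.primeCompl
      (LocalizedModule.mkLinearMap p.asIdeal.primeCompl M) hS)
  exact ⟨z, hzS, hz⟩

section Involution

variable {B : Type*} [CommRing B] {σ : B →+* B} {Z : Set B} {x : B}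

theorem isIntegral_fixedSubring (hσ : ∀ b, σ (σ b) = b) :
    Algebra.IsIntegral (fixedSubring σ) B := by
  refine ⟨fun b => ?_⟩
  have htr : σ (b + σ b) = b + σ b := by rw [map_add, hσ, add_comm]
  have hnorm : σ (b * σ b) = b * σ b := by rw [map_mul, hσ, mul_comm]
  open Polynomial in
  refine ⟨X ^ 2 - C ⟨b + σ b, htr⟩ * X + C ⟨b * σ b, hnorm⟩, by monicity!, ?_⟩
  simp only [Polynomial.eval₂_add, Polynomial.eval₂_sub, Polynomial.eval₂_mul,
    Polynomial.eval₂_pow, Polynomial.eval₂_X, Polynomial.eval₂_C]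
  show b ^ 2 - (b + σ b) * b + b * σ b = 0
  ring

theorem apply_eq_neg_of_mem_lsub (hσ : ∀ b, σ (σ b) = b) (hx : x ∈ lsub σ) :
    σ x = -x := by
  obtain ⟨a, rfl⟩ := hx
  rw [map_sub, hσ, neg_sub]

theorem apply_notMem_of_iideal_le {Q : Ideal B} (hQ : iideal σ ≤ Q) {w : B} (hw : w ∉ Q) :
    σ w ∉ Q := fun hσw =>
  hw (by simpa using Q.add_mem (hQ (Ideal.subset_span ⟨w, rfl⟩)) hσw)

theorem exists_smul_mem_span_of_notMem {Q : Ideal B} [Q.IsPrime] {z : B} (hzZ : z ∈ Z)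
    (hz : σ z = -z) (hzQ : z ∉ Q) (hx : σ x = -x) :
    ∃ s : fixedSubring σ, (s : B) ∉ Q ∧ s • x ∈ Submodule.span (fixedSubring σ) Z := by
  have hzz : σ (z * z) = z * z := by rw [map_mul, hz, neg_mul_neg]
  have hzx : σ (z * x) = z * x := by rw [map_mul, hz, hx, neg_mul_neg]
  refine ⟨⟨z * z, hzz⟩, Q.primeCompl.mul_mem hzQ hzQ, ?_⟩
  have : (⟨z * z, hzz⟩ : fixedSubring σ) • x = (⟨z * x, hzx⟩ : fixedSubring σ) • z := by
    show z * z * x = z * x * z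
    ring
  rw [this]
  exact Submodule.smul_mem _ _ (Submodule.subset_span hzZ)

theorem exists_smul_mem_span_of_iideal_le {Q : Ideal B} [Q.IsPrime] (hσ : ∀ b, σ (σ b) = b)
    (hQ : iideal σ ≤ Q) {z : B} (hzZ : z ∈ Z) (hz : σ z = -z)
    (hann : ∀ b, b * z = 0 → ∃ w ∉ Q, w * b = 0) (hx : σ x = -x)
    {w c : B} (hwQ : w ∉ Q) (hwx : w * x = c * z) :
    ∃ s : fixedSubring σ, (s : B) ∉ Q ∧ s • x ∈ Submodule.span (fixedSubring σ) Z := by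
  have hσwx : σ w * x = σ c * z := by
    simpa [hx, hz] using congrArg σ hwx
  obtain ⟨v, hvQ, hv⟩ := hann (c * σ w - σ c * w)
    (by linear_combination (-σ w) * hwx + w * hσwx)
  set s := w * σ w * (v * σ v)
  set r := c * σ w * (v * σ v)
  have hs : σ s = s := by simp only [s, map_mul, hσ]; ring
  have hr : σ r = r := by simp only [r, map_mul, hσ]; linear_combination (-σ v) * hv
  refine ⟨⟨s, hs⟩, ?_, ?_⟩
  · exact Q.primeCompl.mul_mem (Q.primeCompl.mul_mem hwQ (apply_notMem_of_iideal_le hQ hwQ))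
      (Q.primeCompl.mul_mem hvQ (apply_notMem_of_iideal_le hQ hvQ))
  · have : (⟨s, hs⟩ : fixedSubring σ) • x = (⟨r, hr⟩ : fixedSubring σ) • z := by
      show s * x = r * z
      linear_combination (σ w * (v * σ v)) * hwx
    rw [this]
    exact Submodule.smul_mem _ _ (Submodule.subset_span hzZ)

theorem exists_smul_mem_span_of_isInvertibleIdeal (hσ : ∀ b, σ (σ b) = b)
    (hZ : ∀ z ∈ Z, σ z = -z) (hI : IsInvertibleIdeal (iideal σ))
    (hZI : iideal σ = Ideal.span Z) (Q : Ideal B) [Q.IsPrime] (hxL : x ∈ lsub σ) :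
    ∃ s : fixedSubring σ, (s : B) ∉ Q ∧ s • x ∈ Submodule.span (fixedSubring σ) Z := by
  have hx := apply_eq_neg_of_mem_lsub hσ hxL
  by_cases hQ : iideal σ ≤ Q
  · obtain ⟨_, _, hrank⟩ := hZI ▸ hI
    obtain ⟨z, hzZ, hz⟩ := Module.exists_mem_bijective_toSpanSingleton_localizedModule
      ⟨Q, ‹_›⟩ (hrank ⟨Q, ‹_›⟩) Submodule.span_span_coe_preimage
    have hxI : x ∈ Ideal.span Z := hZI ▸ Ideal.subset_span hxL
    obtain ⟨w, hwQ, c, hwx⟩ := LocalizedModule.exists_smul_eq_smul_of_surjective hz.2 ⟨x, hxI⟩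
    refine exists_smul_mem_span_of_iideal_le hσ hQ hzZ (hZ _ hzZ) (fun b hb => ?_) hx hwQ
      (congrArg Subtype.val hwx)
    exact LocalizedModule.exists_mul_eq_zero_of_injective hz.1 (Subtype.ext hb)
  · obtain ⟨z, hzZ, hzQ⟩ : ∃ z ∈ Z, z ∉ Q := by
      by_contra! h
      exact hQ (hZI ▸ Ideal.span_le.mpr h)
    exact exists_smul_mem_span_of_notMem hzZ (hZ z hzZ) hzQ hx

theorem lsub_le_span_of_isInvertibleIdeal (hσ : ∀ b, σ (σ b) = b)
    (hZ : ∀ z ∈ Z, σ z = -z) (hI : IsInvertibleIdeal (iideal σ))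
    (hZI : iideal σ = Ideal.span Z) : lsub σ ≤ Submodule.span (fixedSubring σ) Z := by
  have := isIntegral_fixedSubring hσ
  intro x hx
  refine Submodule.mem_of_forall_isMaximal_exists_smul_mem fun P hP => ?_
  obtain ⟨Q, hQ, rfl⟩ := Ideal.exists_ideal_over_maximal_of_isIntegral (S := B) P (by simp)
  exact exists_smul_mem_span_of_isInvertibleIdeal hσ hZ hI hZI Q hx

end Involution

section Equivariant

variable {A B : Type*} [CommRing A] [CommRing B] {σA : A →+* A} {σB : B →+* B} {f : A →+* B}

theorem image_lsub_subset_lsub (hf : ∀ a, f (σA a) = σB (f a)) :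
    f '' (lsub σA : Set A) ⊆ lsub σB := by
  rintro _ ⟨_, ⟨a, rfl⟩, rfl⟩
  exact ⟨f a, by rw [map_sub, hf]⟩

theorem lamMap_tmul (hf : ∀ a, f (σA a) = σB (f a)) (b : fixedSubring σB) (x : lsub σA) :
    letI := Module.compHom (fixedSubring σB) (fixedHom σA σB f hf)
    (lamMap σA σB f hf (b ⊗ₜ[fixedSubring σA] x) : B) = b * f x := by
  let := Module.compHom (fixedSubring σB) (fixedHom σA σB f hf)
  exact congrArg Subtype.val (TensorProduct.liftAddHom_tmul _ _ _ _)

theorem lamMap_surjective_of_le_span (hf : ∀ a, f (σA a) = σB (f a))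
    (h : lsub σB ≤ Submodule.span (fixedSubring σB) (f '' (lsub σA : Set A))) :
    Function.Surjective (lamMap σA σB f hf) := by
  let := Module.compHom (fixedSubring σB) (fixedHom σA σB f hf)
  rintro ⟨y, hy⟩
  have hy' := h hy
  rw [Set.image_eq_range, Finsupp.mem_span_range_iff_exists_finsupp] at hy'
  obtain ⟨c, rfl⟩ := hy'
  refine ⟨c.sum fun x b => b ⊗ₜ[fixedSubring σA] x, Subtype.ext ?_⟩
  simp [Finsupp.sum, lamMap_tmul, Subring.smul_def]

end Equivariant

theorem span_image_L_eq_span_L_of_pure_of_FPR_general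
    {k : Type*} [Field k] {A B : Type*} [CommRing A] [CommRing B]
    [Algebra k A] [Algebra k B]
    (σA : A →ₐ[k] A)
    (σB : B →ₐ[k] B) (hσB : ∀ b : B, σB (σB b) = b)
    (f : A →ₐ[k] B) (hf : ∀ a : A, f.toRingHom (σA.toRingHom a) = σB.toRingHom (f.toRingHom a))
    (hpure : IsInvertibleIdeal (iideal σB.toRingHom))
    (hFPR : iideal σB.toRingHom =
      Ideal.span (⇑f.toRingHom '' (lsub σA.toRingHom : Set A))) :
    Submodule.span (fixedSubring σB.toRingHom) (⇑f.toRingHom '' (lsub σA.toRingHom : Set A)) =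
        Submodule.span (fixedSubring σB.toRingHom) (lsub σB.toRingHom : Set B) ∧
      Function.Surjective (lamMap σA.toRingHom σB.toRingHom f.toRingHom hf) := by
  have hZL := image_lsub_subset_lsub hf
  have hLZ := lsub_le_span_of_isInvertibleIdeal hσB
    (fun z hz => apply_eq_neg_of_mem_lsub hσB (hZL hz)) hpure hFPR
  refine ⟨le_antisymm (Submodule.span_mono hZL) ?_, lamMap_surjective_of_le_span hf hLZ⟩
  rwa [Submodule.span_eq]

/-- If `f : (A, σ_A) → (B, σ_B)` is an equivariant homomorphism of finitely generated
algebras with involution over a field `k`, `(B, σ_B)` is pure (`I_B` is an invertible ideal)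
and `f` is fixed-point reflecting (`I_B` is generated by `f(L_A)`), then the
`B^{σ_B}`-submodule of `B` generated by `f(L_A)` equals the one generated by `L_B`;
in other words, `λ_f : B^{σ_B} ⊗_{A^{σ_A}} L_A → L_B` is surjective. -/
theorem span_image_L_eq_span_L_of_pure_of_FPR
    {k : Type*} [Field k] {A B : Type*} [CommRing A] [CommRing B]
    [Algebra k A] [Algebra k B] [Algebra.FiniteType k A] [Algebra.FiniteType k B]
    (σA : A →ₐ[k] A) (hσA : ∀ a : A, σA (σA a) = a)
    (σB : B →ₐ[k] B) (hσB : ∀ b : B, σB (σB b) = b)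
    (f : A →ₐ[k] B) (hf : ∀ a : A, f.toRingHom (σA.toRingHom a) = σB.toRingHom (f.toRingHom a))
    (hpure : IsInvertibleIdeal (iideal σB.toRingHom))
    (hFPR : iideal σB.toRingHom =
      Ideal.span (⇑f.toRingHom '' (lsub σA.toRingHom : Set A))) :
    Submodule.span (fixedSubring σB.toRingHom) (⇑f.toRingHom '' (lsub σA.toRingHom : Set A)) =
        Submodule.span (fixedSubring σB.toRingHom) (lsub σB.toRingHom : Set B) ∧
      Function.Surjective (lamMap σA.toRingHom σB.toRingHom f.toRingHom hf) :=
  span_image_L_eq_span_L_of_pure_of_FPR_general σA σB hσB f hf hpure hFPR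
end

section
/- Let k be a field, A a finitely generated commutative k-algebra, σ : A → A a k-algebra involution, and I ⊆ A a σ-stable ideal (σ(I) = I), so that σ induces an involution σ̄ on A/I. Let I_A be the ideal of A generated by {a − σ(a) : a ∈ A}, and let I_{A/I} be the ideal of A/I generated by {x − σ̄(x) : x ∈ A/I}. Assume both I_A and I_{A/I} are invertible ideals (finitely generated projective of rank one over A, resp. over A/I). Then the induced ring homomorphism A^σ → (A/I)^{σ̄} is surjective: every σ̄-fixed element of A/I lifts to a σ-fixed element of A. -/
/-!
Write `B = A^σ` and take `a` with `a - σ a ∈ I`; a lift is `a - t` for any `t ∈ I` with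
`t - σ t = a - σ a`. The `b ∈ B` with `b (a - σ a)` of this form make up an ideal of `B`, so it
suffices to work after localizing at a prime `P` of `B`. The localization `R` of `A` is integral
over the local ring `B_P`, so it has at most two maximal ideals, exchanged by `σ`. Nakayama then gives
`c = b - σ b` outside `m I_R` for every maximal `m`, and projectivity of `I_R` gives a functional
`f` with `f c = 1`, so `I_R = (c)` with `c` a non-zero-divisor. Hence `a - σ a = u c` with `u`
fixed, i.e. `a - σ a = u b - σ (u b)`. The image of `c` generates the invertible ideal of the
localized quotient, so it is a non-zero-divisor there too; as it kills the image of `u`, that image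
is `0`, so `t = u b` lies in the localization of `I`.
-/

open nonZeroDivisors

namespace IsInvertibleIdeal

variable {R : Type*} [CommRing R] {J : Ideal R}

lemma annihilator_le_nilradical (hJ : IsInvertibleIdeal J) :
    Module.annihilator R J ≤ nilradical R := by
  obtain ⟨_, _, hrank⟩ := hJ
  rw [nilradical_eq_sInf]
  refine le_sInf fun p hp => ?_
  have hsupp := (Module.rankAtStalk_pos_iff_mem_support (M := J) ⟨p, hp⟩).mp
    (by rw [hrank]; exact one_pos)
  exact Module.mem_support_iff_of_finite.mp hsupp

lemma not_le_smul (hJ : IsInvertibleIdeal J) {m : Ideal R} (hm : m.IsMaximal) :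
    ¬ J ≤ m • J := by
  intro hle
  obtain ⟨r, hr1, hrJ⟩ := Submodule.exists_sub_one_mem_and_smul_eq_zero_of_fg_of_le_smul m J
    (Module.Finite.iff_fg.mp hJ.1) hle
  have hr : r ∈ Module.annihilator R J :=
    Module.mem_annihilator.mpr fun x => Subtype.ext (hrJ x x.2)
  have hrm : r ∈ m := nilradical_le_prime m (hJ.annihilator_le_nilradical hr)
  exact hm.ne_top ((Ideal.eq_top_iff_one m).mpr (by simpa using m.sub_mem hrm hr1))

end IsInvertibleIdeal

section Projective

variable {R : Type*} [CommRing R] {M : Type*} [AddCommGroup M] [Module R M]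
  [Module.Projective R M]

lemma Module.Projective.mem_smul_top_of_forall_apply_mem {I : Ideal R} {x : M}
    (hx : ∀ f : M →ₗ[R] R, f x ∈ I) : x ∈ I • (⊤ : Submodule R M) := by
  obtain ⟨s, hs⟩ := Module.projective_def'.mp ‹Module.Projective R M›
  rw [← LinearMap.id_apply (R := R) x, ← hs, LinearMap.comp_apply,
    Finsupp.linearCombination_apply]
  exact Submodule.sum_mem _ fun z _ =>
    Submodule.smul_mem_smul (hx (Finsupp.lapply z ∘ₗ s)) Submodule.mem_top

lemma Module.Projective.exists_apply_eq_one {x : M}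
    (hx : ∀ m : Ideal R, m.IsMaximal → x ∉ m • (⊤ : Submodule R M)) :
    ∃ f : M →ₗ[R] R, f x = 1 := by
  by_contra! h
  have hne : LinearMap.range (LinearMap.applyₗ (R := R) (M₂ := R) x) ≠ ⊤ :=
    (Ideal.ne_top_iff_one _).mpr fun ⟨f, hf⟩ => h f hf
  obtain ⟨m, hm, hle⟩ := Ideal.exists_le_maximal _ hne
  exact hx m hm (mem_smul_top_of_forall_apply_mem fun f => hle ⟨f, rfl⟩)

end Projective

namespace Ideal

variable {R : Type*} [CommRing R] {J : Ideal R} {c : R} (hc : c ∈ J)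

lemma eq_span_singleton_of_apply_eq_one {f : J →ₗ[R] R} (hf : f ⟨c, hc⟩ = 1) :
    J = span {c} := by
  refine le_antisymm (fun z hz => mem_span_singleton'.mpr ⟨f ⟨z, hz⟩, ?_⟩)
    (span_le.mpr (Set.singleton_subset_iff.mpr hc))
  have hswap : z • (⟨c, hc⟩ : J) = c • ⟨z, hz⟩ := Subtype.ext (mul_comm z c)
  have := congrArg f hswap
  rw [map_smul, map_smul, hf, smul_eq_mul, smul_eq_mul, mul_one] at this
  rw [mul_comm]
  exact this.symm

lemma mem_nonZeroDivisors_of_apply_eq_one {f : J →ₗ[R] R} (hf : f ⟨c, hc⟩ = 1) :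
    c ∈ R⁰ := by
  refine mem_nonZeroDivisors_iff_right.mpr fun r hr => ?_
  have hzero : r • (⟨c, hc⟩ : J) = 0 := Subtype.ext hr
  have := congrArg f hzero
  rwa [map_smul, hf, smul_eq_mul, mul_one, map_zero] at this

end Ideal

lemma IsInvertibleIdeal.mem_nonZeroDivisors_of_span_singleton {R : Type*} [CommRing R] {c : R}
    (hc : IsInvertibleIdeal (Ideal.span {c})) : c ∈ R⁰ := by
  have := hc.2.1
  have hcJ : c ∈ Ideal.span {c} := Ideal.mem_span_singleton_self c
  obtain ⟨f, hf⟩ := Module.Projective.exists_apply_eq_one (x := (⟨c, hcJ⟩ : Ideal.span {c}))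
    fun m hm hcm => hc.not_le_smul hm <| Ideal.span_le.mpr <| Set.singleton_subset_iff.mpr <|
      (Submodule.mem_smul_top_iff m _ _).mp hcm
  exact Ideal.mem_nonZeroDivisors_of_apply_eq_one hcJ hf

section Involution

variable {R : Type*} [CommRing R] (τ : R →+* R)

lemma sub_mem_iideal (a : R) : a - τ a ∈ iideal τ :=
  Ideal.subset_span ⟨a, rfl⟩

lemma map_iideal_le {R' : Type*} [CommRing R'] (ψ : R →+* R') (τ' : R' →+* R')
    (hψτ : ∀ x, ψ (τ x) = τ' (ψ x)) : (iideal τ).map ψ ≤ iideal τ' := by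
  rw [iideal, Ideal.map_span, Ideal.span_le]
  rintro _ ⟨_, ⟨a, rfl⟩, rfl⟩
  rw [map_sub, hψτ]
  exact sub_mem_iideal τ' (ψ a)

lemma iideal_eq_map_of_surjective {R' : Type*} [CommRing R'] (ψ : R →+* R')
    (hψ : Function.Surjective ψ) (τ' : R' →+* R') (hψτ : ∀ x, ψ (τ x) = τ' (ψ x)) :
    iideal τ' = (iideal τ).map ψ := by
  refine le_antisymm ?_ (map_iideal_le τ ψ τ' hψτ)
  rw [iideal, Ideal.span_le]
  rintro _ ⟨y, rfl⟩
  obtain ⟨x, rfl⟩ := hψ y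
  show ψ x - τ' (ψ x) ∈ _
  rw [← hψτ, ← map_sub]
  exact Ideal.mem_map_of_mem ψ (sub_mem_iideal τ x)

lemma isIntegral_fixedSubring_s9 (hτ : ∀ x, τ (τ x) = x) :
    Algebra.IsIntegral (fixedSubring τ) R := by
  refine ⟨fun z => ?_⟩
  let tr : fixedSubring τ := ⟨z + τ z, show τ (z + τ z) = z + τ z by rw [map_add, hτ, add_comm]⟩
  let nm : fixedSubring τ := ⟨z * τ z, show τ (z * τ z) = z * τ z by rw [map_mul, hτ, mul_comm]⟩
  refine ⟨.X ^ 2 - .C tr * .X + .C nm, by monicity!, ?_⟩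
  simp only [Polynomial.eval₂_add, Polynomial.eval₂_sub, Polynomial.eval₂_mul,
    Polynomial.eval₂_pow, Polynomial.eval₂_X, Polynomial.eval₂_C]
  show z ^ 2 - (z + τ z) * z + z * τ z = 0
  ring

/-- When `R^τ` is local, `R` is integral over it, so all maximal ideals of `R` lie over the same
one; a maximal ideal `q` then lies in `p ∪ τ⁻¹ p`, because `z * τ z ∈ q ∩ R^τ ⊆ p`. -/
lemma eq_or_eq_comap_of_isLocalRing_fixedSubring (hτ : ∀ x, τ (τ x) = x)
    [IsLocalRing (fixedSubring τ)] {p q : Ideal R} (hp : p.IsMaximal) (hq : q.IsMaximal) :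
    q = p ∨ q = p.comap τ := by
  have := isIntegral_fixedSubring_s9 τ hτ
  have hunder : ∀ m : Ideal R, m.IsMaximal →
      m.comap (algebraMap (fixedSubring τ) R) = IsLocalRing.maximalIdeal _ := fun m _ =>
    IsLocalRing.eq_maximalIdeal (Ideal.isMaximal_comap_of_isIntegral_of_isMaximal m)
  have hsub : (q : Set R) ⊆ p ∪ p.comap τ := by
    intro z hz
    let nm : fixedSubring τ := ⟨z * τ z, show τ (z * τ z) = z * τ z by rw [map_mul, hτ, mul_comm]⟩
    have hnm : nm ∈ q.comap (algebraMap (fixedSubring τ) R) := q.mul_mem_right (τ z) hz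
    rw [hunder q hq, ← hunder p hp] at hnm
    exact hp.isPrime.mem_or_mem hnm
  have hτp : (p.comap τ).IsMaximal := Ideal.comap_isMaximal_of_surjective τ fun y => ⟨τ y, hτ y⟩
  rcases Ideal.subset_union.mp hsub with h | h
  · exact .inl (hq.eq_of_le hp.ne_top h)
  · exact .inr (hq.eq_of_le hτp.ne_top h)

lemma sub_notMem_comap_mul_iideal (hτ : ∀ x, τ (τ x) = x) {p : Ideal R} {b : R}
    (hb : b - τ b ∉ p * iideal τ) : b - τ b ∉ p.comap τ * iideal τ := by
  intro h
  have hmap : (p.comap τ * iideal τ).map τ ≤ p * iideal τ := by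
    rw [Ideal.map_mul]
    exact Ideal.mul_mono Ideal.map_comap_le (map_iideal_le τ τ τ fun _ => rfl)
  have hneg := hmap (Ideal.mem_map_of_mem τ h)
  rw [map_sub, hτ, ← neg_sub] at hneg
  exact hb (neg_mem_iff.mp hneg)

lemma exists_apply_sub_eq_one (hτ : ∀ x, τ (τ x) = x)
    (hmax : ∀ p q : Ideal R, p.IsMaximal → q.IsMaximal → q = p ∨ q = p.comap τ)
    (hJ : IsInvertibleIdeal (iideal τ)) :
    ∃ b, ∃ f : iideal τ →ₗ[R] R, f ⟨b - τ b, sub_mem_iideal τ b⟩ = 1 := by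
  rcases subsingleton_or_nontrivial R with _ | _
  · exact ⟨0, 0, Subsingleton.elim _ _⟩
  obtain ⟨p, hp⟩ := Ideal.exists_maximal R
  obtain ⟨b, hb⟩ : ∃ b, b - τ b ∉ p * iideal τ := by
    by_contra! h
    exact hJ.not_le_smul hp (Ideal.span_le.mpr fun _ ⟨b, hb⟩ => hb ▸ h b)
  have := hJ.2.1
  refine ⟨b, Module.Projective.exists_apply_eq_one fun m hm hbm => ?_⟩
  rw [Submodule.mem_smul_top_iff, Ideal.smul_eq_mul] at hbm
  rcases hmax p m hp hm with rfl | rfl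
  · exact hb hbm
  · exact sub_notMem_comap_mul_iideal τ hτ hb hbm

theorem exists_sub_eq_sub_of_map_sub_eq_zero (hτ : ∀ x, τ (τ x) = x)
    (hmax : ∀ p q : Ideal R, p.IsMaximal → q.IsMaximal → q = p ∨ q = p.comap τ)
    (hJ : IsInvertibleIdeal (iideal τ)) {R' : Type*} [CommRing R'] (ψ : R →+* R')
    (hψ : Function.Surjective ψ) (τ' : R' →+* R') (hψτ : ∀ x, ψ (τ x) = τ' (ψ x))
    (hJ' : IsInvertibleIdeal (iideal τ')) {a : R} (ha : ψ (a - τ a) = 0) :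
    ∃ t, ψ t = 0 ∧ t - τ t = a - τ a := by
  obtain ⟨b, f, hf⟩ := exists_apply_sub_eq_one τ hτ hmax hJ
  set c := b - τ b with hcdef
  have hJc : iideal τ = Ideal.span {c} := Ideal.eq_span_singleton_of_apply_eq_one _ hf
  have hc : c ∈ R⁰ := Ideal.mem_nonZeroDivisors_of_apply_eq_one _ hf
  have hψc : ψ c ∈ R'⁰ := by
    rw [iideal_eq_map_of_surjective τ ψ hψ τ' hψτ, hJc, Ideal.map_span,
      Set.image_singleton] at hJ'
    exact hJ'.mem_nonZeroDivisors_of_span_singleton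
  obtain ⟨u, hu⟩ := Ideal.mem_span_singleton'.mp (hJc ▸ sub_mem_iideal τ a)
  have hτu : τ u = u := by
    have hτc : τ c = -c := by rw [hcdef, map_sub, hτ, neg_sub]
    have h := congrArg τ hu
    rw [map_mul, hτc, map_sub, hτ] at h
    exact sub_eq_zero.mp ((mul_right_mem_nonZeroDivisors_eq_zero_iff hc).mp
      (by linear_combination -h - hu))
  have hψu : ψ u = 0 :=
    (mul_right_mem_nonZeroDivisors_eq_zero_iff hψc).mp (by rw [← map_mul, hu, ha])
  exact ⟨u * b, by rw [map_mul, hψu, zero_mul], by rw [map_mul, hτu, ← hu]; ring⟩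

lemma isUnit_fixedSubring_iff {ξ : fixedSubring τ} :
    IsUnit ξ ↔ IsUnit (ξ : R) := by
  refine ⟨fun h => h.map (fixedSubring τ).subtype, fun h => ?_⟩
  obtain ⟨w, hw⟩ := h.exists_right_inv
  have hτw : τ w = w := by
    have h' : (ξ : R) * τ w = 1 := by rw [← ξ.2, ← map_mul, hw, map_one]
    calc τ w = w * ((ξ : R) * τ w) := by rw [← mul_assoc, mul_comm w, hw, one_mul]
      _ = w := by rw [h', mul_one]
  exact IsUnit.of_mul_eq_one (⟨w, hτw⟩ : fixedSubring τ) (Subtype.ext hw)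

end Involution

section Localization

variable {A : Type*} [CommRing A] {R : Type*} [CommRing R] [Algebra A R]

lemma IsInvertibleIdeal.map_algebraMap (S : Submonoid A) [IsLocalization S R] {J : Ideal A}
    (hJ : IsInvertibleIdeal J) :
    IsInvertibleIdeal (J.map (algebraMap A R)) := by
  obtain ⟨_, _, hrank⟩ := hJ
  have hloc := Algebra.idealMap_isLocalizedModule R S J
  refine ⟨Module.Finite.of_isLocalizedModule S (Algebra.idealMap R J),
    Module.projective_of_isLocalizedModule S (Algebra.idealMap R J), fun p => ?_⟩
  rw [Module.rankAtStalk_isBaseChange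
    (IsLocalizedModule.isBaseChange S R (Algebra.idealMap R J)) p]
  exact hrank _

variable {S : Submonoid A} [IsLocalization S R] (σ : A →+* A) (τ : R →+* R)

lemma apply_mk'_eq_mk'_apply (hS : ∀ s ∈ S, σ s = s)
    (hτ : ∀ x, τ (algebraMap A R x) = algebraMap A R (σ x)) (x : A) (s : S) :
    τ (IsLocalization.mk' R x s) = IsLocalization.mk' R (σ x) s := by
  rw [IsLocalization.eq_mk'_iff_mul_eq, ← hS s s.2, ← hτ, ← map_mul, IsLocalization.mk'_spec,
    hτ]

lemma apply_apply_of_isLocalization (hσ : ∀ x, σ (σ x) = x) (hS : ∀ s ∈ S, σ s = s)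
    (hτ : ∀ x, τ (algebraMap A R x) = algebraMap A R (σ x)) (z : R) : τ (τ z) = z := by
  obtain ⟨⟨x, s⟩, rfl⟩ := IsLocalization.mk'_surjective S z
  simp only [apply_mk'_eq_mk'_apply σ τ hS hτ, hσ]

lemma iideal_eq_map_of_isLocalization (hS : ∀ s ∈ S, σ s = s)
    (hτ : ∀ x, τ (algebraMap A R x) = algebraMap A R (σ x)) :
    iideal τ = (iideal σ).map (algebraMap A R) := by
  refine le_antisymm ?_ (map_iideal_le σ _ τ fun x => (hτ x).symm)
  rw [iideal, Ideal.span_le]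
  rintro _ ⟨z, rfl⟩
  obtain ⟨⟨x, s⟩, rfl⟩ := IsLocalization.mk'_surjective S z
  show IsLocalization.mk' R x s - τ (IsLocalization.mk' R x s) ∈ _
  rw [apply_mk'_eq_mk'_apply σ τ hS hτ, IsLocalization.mk'_eq_mul_mk'_one x,
    IsLocalization.mk'_eq_mul_mk'_one (σ x), ← sub_mul, ← map_sub]
  exact Ideal.mul_mem_right _ _ (Ideal.mem_map_of_mem _ (sub_mem_iideal σ x))

lemma exists_mk'_eq_of_apply_eq (hS : ∀ s ∈ S, σ s = s)
    (hτ : ∀ x, τ (algebraMap A R x) = algebraMap A R (σ x)) {z : R} (hz : τ z = z) :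
    ∃ (x : A) (s : S), σ x = x ∧ IsLocalization.mk' R x s = z := by
  obtain ⟨⟨x, s⟩, rfl⟩ := IsLocalization.mk'_surjective S z
  rw [apply_mk'_eq_mk'_apply σ τ hS hτ, IsLocalization.eq] at hz
  obtain ⟨u, hu⟩ := hz
  refine ⟨x * ↑(u * s), s * (u * s), ?_, IsLocalization.mk'_cancel _ _ _⟩
  rw [map_mul, hS _ (u * s).2, Submonoid.coe_mul]
  linear_combination hu

lemma exists_sub_eq_mul_of_mem_map (hS : ∀ s ∈ S, σ s = s)
    (hτ : ∀ x, τ (algebraMap A R x) = algebraMap A R (σ x)) {I : Ideal A} {t : R}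
    (ht : t ∈ I.map (algebraMap A R)) {d : A} (htd : t - τ t = algebraMap A R d) :
    ∃ s ∈ S, ∃ x ∈ I, x - σ x = s * d := by
  obtain ⟨⟨x, s⟩, rfl⟩ := IsLocalization.mk'_surjective S t
  dsimp only at ht htd
  obtain ⟨s', hs', hs'x⟩ := (IsLocalization.mk'_mem_map_algebraMap_iff S R I x s).mp ht
  rw [apply_mk'_eq_mk'_apply σ τ hS hτ, IsLocalization.mk'_eq_mul_mk'_one x,
    IsLocalization.mk'_eq_mul_mk'_one (σ x), ← sub_mul, ← map_sub,
    ← IsLocalization.mk'_eq_mul_mk'_one, IsLocalization.mk'_eq_iff_eq_mul, ← map_mul,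
    mul_comm] at htd
  obtain ⟨u, hu⟩ := (IsLocalization.eq_iff_exists S R).mp htd
  refine ⟨u * s' * s, mul_mem (mul_mem u.2 hs') s.2, u * (s' * x),
    I.mul_mem_left _ hs'x, ?_⟩
  rw [map_mul, map_mul, hS u u.2, hS s' hs']
  linear_combination s' * hu

lemma isLocalRing_fixedSubring_of_isLocalization_primeCompl (P : Ideal (fixedSubring σ))
    [P.IsPrime] [IsLocalization (Algebra.algebraMapSubmonoid A P.primeCompl) R]
    (hτ : ∀ x, τ (algebraMap A R x) = algebraMap A R (σ x)) :
    IsLocalRing (fixedSubring τ) := by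
  set S := Algebra.algebraMapSubmonoid A P.primeCompl
  have hS : ∀ s ∈ S, σ s = s := by
    rintro _ ⟨b, -, rfl⟩
    exact b.2
  have : Nontrivial R := (IsLocalization.toLocalizationMap S R).nontrivial fun ⟨b, hb, hb0⟩ =>
    hb ((Subtype.ext hb0 : b = 0) ▸ P.zero_mem)
  have : Nontrivial (fixedSubring τ) := ⟨⟨0, 1, fun h => zero_ne_one congr(($h).1)⟩⟩
  refine IsLocalRing.of_isUnit_or_isUnit_one_sub_self fun ξ => ?_
  simp only [isUnit_fixedSubring_iff]
  obtain ⟨x, s, hx, hξ⟩ := exists_mk'_eq_of_apply_eq σ τ hS hτ ξ.2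
  have hunit : ∀ y ∈ S, ∀ z : R, z * algebraMap A R s = algebraMap A R y → IsUnit z :=
    fun y hy z h => isUnit_of_mul_isUnit_left (h ▸ IsLocalization.map_units R ⟨y, hy⟩)
  obtain ⟨b, hb, hbs⟩ := s.2
  by_cases hxP : (⟨x, hx⟩ : fixedSubring σ) ∈ P
  · refine .inr (hunit (s - x) ⟨b - ⟨x, hx⟩, fun h => hb (by simpa using P.add_mem h hxP),
      by rw [map_sub, hbs]; rfl⟩ _ ?_)
    show (1 - (ξ : R)) * _ = _
    rw [← hξ, sub_mul, one_mul, IsLocalization.mk'_spec, map_sub]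
  · exact .inl (hunit x ⟨⟨x, hx⟩, hxP, rfl⟩ _ (hξ ▸ IsLocalization.mk'_spec R x s))

end Localization

def liftingIdeal {R : Type*} [CommRing R] (τ : R →+* R) (I : Ideal R) (d : R) :
    Ideal (fixedSubring τ) where
  carrier := {b | ∃ t ∈ I, t - τ t = b * d}
  add_mem' := by
    rintro b₁ b₂ ⟨t₁, ht₁, h₁⟩ ⟨t₂, ht₂, h₂⟩
    refine ⟨t₁ + t₂, I.add_mem ht₁ ht₂, ?_⟩
    rw [map_add, AddMemClass.coe_add]
    linear_combination h₁ + h₂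
  zero_mem' := ⟨0, I.zero_mem, by rw [map_zero, sub_zero, ZeroMemClass.coe_zero, zero_mul]⟩
  smul_mem' := by
    rintro c b ⟨t, ht, h⟩
    refine ⟨c * t, I.mul_mem_left _ ht, ?_⟩
    rw [map_mul, c.2, smul_eq_mul, MulMemClass.coe_mul]
    linear_combination (c : R) * h

theorem liftingIdeal_not_le {A : Type*} [CommRing A] (σ : A →+* A) (hσ : ∀ a, σ (σ a) = a)
    (I : Ideal A) (σbar : A ⧸ I →+* A ⧸ I)
    (hσbar : ∀ a, σbar (Ideal.Quotient.mk I a) = Ideal.Quotient.mk I (σ a))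
    (hpureA : IsInvertibleIdeal (iideal σ)) (hpureQ : IsInvertibleIdeal (iideal σbar))
    {a : A} (ha : a - σ a ∈ I) (P : Ideal (fixedSubring σ)) [P.IsPrime] :
    ¬ liftingIdeal σ I (a - σ a) ≤ P := by
  let S := Algebra.algebraMapSubmonoid A P.primeCompl
  have hS : ∀ s ∈ S, σ s = s := by
    rintro _ ⟨b, -, rfl⟩
    exact b.2
  let R := Localization S
  let τ : R →+* R := IsLocalization.map R σ
    (show S ≤ S.comap σ from fun s hs => show σ s ∈ S from (hS s hs).symm ▸ hs)
  have hτ : ∀ x, τ (algebraMap A R x) = algebraMap A R (σ x) := IsLocalization.map_eq _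
  let T := S.map (Ideal.Quotient.mk I)
  have hT : ∀ t ∈ T, σbar t = t := by
    rintro _ ⟨s, hs, rfl⟩
    rw [hσbar, hS s hs]
  let R' := Localization T
  let τ' : R' →+* R' :=
    IsLocalization.map R' σbar
      (show T ≤ T.comap σbar from fun t ht => show σbar t ∈ T from (hT t ht).symm ▸ ht)
  have hτ' : ∀ x, τ' (algebraMap _ R' x) = algebraMap _ R' (σbar x) := IsLocalization.map_eq _
  let ψ : R →+* R' := IsLocalization.map R' (Ideal.Quotient.mk I) S.le_comap_map
  have hψ : ∀ x, ψ (algebraMap A R x) = algebraMap _ R' (Ideal.Quotient.mk I x) :=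
    IsLocalization.map_eq _
  have hψτ : ∀ x, ψ (τ x) = τ' (ψ x) := by
    have : ψ.comp τ = τ'.comp ψ := IsLocalization.ringHom_ext S <| RingHom.ext fun x => by
      simp only [RingHom.comp_apply, hτ, hψ, hτ', hσbar]
    exact fun x => congr($this x)
  have hττ := apply_apply_of_isLocalization σ τ hσ hS hτ
  have := isLocalRing_fixedSubring_of_isLocalization_primeCompl σ τ P hτ
  obtain ⟨t, htψ, ht⟩ := exists_sub_eq_sub_of_map_sub_eq_zero τ hττ
    (fun _ _ hp hq => eq_or_eq_comap_of_isLocalRing_fixedSubring τ hττ hp hq)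
    (iideal_eq_map_of_isLocalization σ τ hS hτ ▸ hpureA.map_algebraMap S)
    ψ (IsLocalization.map_surjective_of_surjective S R R' Ideal.Quotient.mk_surjective) τ' hψτ
    (iideal_eq_map_of_isLocalization σbar τ' hT hτ' ▸ hpureQ.map_algebraMap T)
    (a := algebraMap A R a)
    (by rw [hτ, ← map_sub, hψ, Ideal.Quotient.eq_zero_iff_mem.mpr ha, map_zero])
  have htI : t ∈ I.map (algebraMap A R) := by
    rw [← Ideal.mk_ker (I := I),
      ← IsLocalization.ker_map R' (Ideal.Quotient.mk I) (M := S) (S := R) rfl]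
    exact htψ
  obtain ⟨_, ⟨b, hb, rfl⟩, x, hxI, hx⟩ :=
    exists_sub_eq_mul_of_mem_map σ τ hS hτ htI (d := a - σ a) (by rw [ht, hτ, map_sub])
  exact fun hle => hb (hle ⟨x, hxI, hx⟩)

theorem fixed_elements_lift_of_pure_quotient_general
    {k : Type*} [Field k] {A : Type*} [CommRing A] [Algebra k A]
    (σ : A →ₐ[k] A) (hσ : ∀ a : A, σ (σ a) = a)
    (I : Ideal A)
    (σbar : (A ⧸ I) →+* (A ⧸ I))
    (hσbar : ∀ a : A, σbar (Ideal.Quotient.mk I a) = Ideal.Quotient.mk I (σ a))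
    (hpureA : IsInvertibleIdeal (iideal σ.toRingHom))
    (hpureQ : IsInvertibleIdeal (iideal σbar)) :
    ∀ y : A ⧸ I, σbar y = y → ∃ x : A, σ x = x ∧ Ideal.Quotient.mk I x = y := by
  intro y hy
  obtain ⟨a, rfl⟩ := Ideal.Quotient.mk_surjective y
  have ha : a - σ a ∈ I := Ideal.Quotient.eq.mp (by rw [← hσbar, hy])
  have htop : liftingIdeal σ.toRingHom I (a - σ a) = ⊤ := by
    by_contra hne
    obtain ⟨P, hP, hle⟩ := Ideal.exists_le_maximal _ hne
    exact liftingIdeal_not_le σ.toRingHom hσ I σbar hσbar hpureA hpureQ ha P hle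
  obtain ⟨t, htI, ht⟩ : (1 : fixedSubring σ.toRingHom) ∈ liftingIdeal σ.toRingHom I (a - σ a) :=
    htop ▸ Submodule.mem_top
  refine ⟨a - t, ?_, by rw [map_sub, Ideal.Quotient.eq_zero_iff_mem.mpr htI, sub_zero]⟩
  rw [OneMemClass.coe_one, one_mul] at ht
  rw [map_sub]
  linear_combination ht

/-- Let `σ` be an involution of a finitely generated algebra `A` over a field `k`, and `I` a
`σ`-stable ideal, with induced involution `σ̄` on `A ⧸ I`.  If both `(A, σ)` and
`(A ⧸ I, σ̄)` are pure (the ideals `I_A` and `I_{A/I}` are invertible), then the induced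
homomorphism `A^σ → (A/I)^{σ̄}` is surjective: every `σ̄`-fixed element of `A ⧸ I` lifts to a
`σ`-fixed element of `A`. -/
theorem fixed_elements_lift_of_pure_quotient
    {k : Type*} [Field k] {A : Type*} [CommRing A] [Algebra k A] [Algebra.FiniteType k A]
    (σ : A →ₐ[k] A) (hσ : ∀ a : A, σ (σ a) = a)
    (I : Ideal A) (hI : I.map σ.toRingHom = I)
    (σbar : (A ⧸ I) →+* (A ⧸ I))
    (hσbar : ∀ a : A, σbar (Ideal.Quotient.mk I a) = Ideal.Quotient.mk I (σ a))
    (hpureA : IsInvertibleIdeal (iideal σ.toRingHom))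
    (hpureQ : IsInvertibleIdeal (iideal σbar)) :
    ∀ y : A ⧸ I, σbar y = y → ∃ x : A, σ x = x ∧ Ideal.Quotient.mk I x = y :=
  fixed_elements_lift_of_pure_quotient_general σ hσ I σbar hσbar hpureA hpureQ
end

section
/- Let A be a commutative ring, let I ⊆ J be ideals of A, and suppose there exist elements x₁, …, x_r ∈ A such that J = I + (x₁, …, x_r) and the images of x₁, …, x_r in A/I form a regular sequence on A/I. Then for every integer n ≥ 1 one has I ∩ Jⁿ = I·Jⁿ⁻¹ (where J⁰ = A). -/
/-!
Induct on the length of the sequence, passing from `I` to `K = I + (x₁)`, along which the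
remaining elements stay regular. With `x = x₁` a nonzerodivisor modulo `I` and the claim known
for `K`, an element `a ∈ I ∩ Jⁿ⁺¹` lies in `K Jⁿ = I Jⁿ + x Jⁿ`. Writing `a = b + x d`, we get
`x d ∈ I`, hence `d ∈ I ∩ Jⁿ = I Jⁿ⁻¹` (induction on `n`), and so `x d ∈ I Jⁿ`.
-/

open Ideal RingTheory.Sequence Pointwise

section

variable {A : Type*} [CommRing A]

lemma smul_top_eq_map_mkQ_span_singleton (I : Ideal A) (x : A) :
    (x • ⊤ : Submodule A (A ⧸ I)) = Submodule.map (Submodule.mkQ I) (span {x}) := by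
  rw [← Submodule.range_mkQ I, ← Submodule.map_top, ← Submodule.map_pointwise_smul,
    ← Submodule.ideal_span_singleton_smul, smul_eq_mul, mul_top]

noncomputable def quotSMulTopEquivQuotientSup (I : Ideal A) (x : A) :
    QuotSMulTop x (A ⧸ I) ≃ₗ[A] A ⧸ (I ⊔ span {x}) :=
  (Submodule.quotEquivOfEq _ _ (smul_top_eq_map_mkQ_span_singleton I x)).trans
    (Submodule.quotientQuotientEquivQuotientSup I (span {x}))

lemma isWeaklyRegular_cons_iff_quotient_sup (I : Ideal A) (x : A) (xs : List A) :
    IsWeaklyRegular (A ⧸ I) (x :: xs) ↔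
      IsSMulRegular (A ⧸ I) x ∧ IsWeaklyRegular (A ⧸ (I ⊔ span {x})) xs := by
  rw [isWeaklyRegular_cons_iff, (quotSMulTopEquivQuotientSup I x).isWeaklyRegular_congr]

lemma mem_of_mul_mem_of_isSMulRegular {I : Ideal A} {x d : A}
    (hx : IsSMulRegular (A ⧸ I) x) (hxd : x * d ∈ I) : d ∈ I := by
  rw [← Quotient.eq_zero_iff_mem] at hxd ⊢
  exact hx.right_eq_zero_of_smul hxd

lemma mul_pow_le_inf_pow_succ {I J : Ideal A} (hIJ : I ≤ J) (n : ℕ) :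
    I * J ^ n ≤ I ⊓ J ^ (n + 1) :=
  le_inf Ideal.mul_le_left (pow_succ' J n ▸ mul_mono_left hIJ)

lemma inf_pow_succ_le_mul_pow_of_isSMulRegular {I J : Ideal A} {x : A}
    (hx : IsSMulRegular (A ⧸ I) x) (hxJ : x ∈ J)
    (hK : ∀ m, (I ⊔ span {x}) ⊓ J ^ (m + 1) ≤ (I ⊔ span {x}) * J ^ m) (n : ℕ) :
    I ⊓ J ^ (n + 1) ≤ I * J ^ n := by
  induction n with
  | zero => simp
  | succ n ih =>
    intro a ⟨haI, haJ⟩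
    have haK : a ∈ I * J ^ (n + 1) ⊔ span {x} * J ^ (n + 1) :=
      sup_mul I _ _ ▸ hK (n + 1) ⟨mem_sup_left haI, haJ⟩
    obtain ⟨b, hb, c, hc, rfl⟩ := Submodule.mem_sup.mp haK
    obtain ⟨d, hd, rfl⟩ := mem_span_singleton_mul.mp hc
    have hdI : d ∈ I := mem_of_mul_mem_of_isSMulRegular hx <|
      add_sub_cancel_left b (x * d) ▸ I.sub_mem haI (Ideal.mul_le_left hb)
    have hxd : x * d ∈ J * (I * J ^ n) := mul_mem_mul hxJ (ih ⟨hdI, hd⟩)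
    rw [mul_left_comm, ← pow_succ'] at hxd
    exact add_mem hb hxd

lemma inf_pow_succ_le_mul_pow_of_isWeaklyRegular {I : Ideal A} {xs : List A}
    (h : IsWeaklyRegular (A ⧸ I) xs) (n : ℕ) :
    I ⊓ (I ⊔ ofList xs) ^ (n + 1) ≤ I * (I ⊔ ofList xs) ^ n := by
  induction xs generalizing I n with
  | nil =>
    rw [ofList_nil, sup_bot_eq, ← pow_succ']
    exact inf_le_right
  | cons x xs ih =>
    obtain ⟨hx, hxs⟩ := (isWeaklyRegular_cons_iff_quotient_sup I x xs).mp h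
    rw [ofList_cons, ← sup_assoc]
    exact inf_pow_succ_le_mul_pow_of_isSMulRegular hx
      (mem_sup_left (mem_sup_right (mem_span_singleton_self x))) (ih hxs) n

theorem inf_pow_succ_eq_mul_pow_of_isWeaklyRegular {I : Ideal A} {xs : List A}
    (h : IsWeaklyRegular (A ⧸ I) xs) (n : ℕ) :
    I ⊓ (I ⊔ ofList xs) ^ (n + 1) = I * (I ⊔ ofList xs) ^ n :=
  le_antisymm (inf_pow_succ_le_mul_pow_of_isWeaklyRegular h n)
    (mul_pow_le_inf_pow_succ le_sup_left n)

end

theorem inf_pow_eq_mul_pow_pred_of_regular_sequence_general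
    {A : Type*} [CommRing A] (I J : Ideal A) (xs : List A)
    (hJ : J = I ⊔ Ideal.span {a : A | a ∈ xs})
    (hreg : RingTheory.Sequence.IsRegular (A ⧸ I) (xs.map (Ideal.Quotient.mk I))) :
    ∀ n : ℕ, 1 ≤ n → I ⊓ J ^ n = I * J ^ (n - 1) := by
  intro n hn
  obtain ⟨m, rfl⟩ := Nat.exists_eq_add_of_le' hn
  have hxs : IsWeaklyRegular (A ⧸ I) xs := by
    rw [← isWeaklyRegular_map_algebraMap_iff (A ⧸ I), Quotient.algebraMap_eq]
    exact hreg.toIsWeaklyRegular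
  rw [Nat.add_sub_cancel, hJ]
  exact inf_pow_succ_eq_mul_pow_of_isWeaklyRegular hxs m

/-- Let `I ⊆ J` be ideals of a commutative ring `A` such that `J` is generated over `I` by
finitely many elements whose images in `A ⧸ I` form a regular sequence.  Then for every
`n ≥ 1` one has `I ∩ Jⁿ = I·Jⁿ⁻¹`. -/
theorem inf_pow_eq_mul_pow_pred_of_regular_sequence
    {A : Type*} [CommRing A] (I J : Ideal A) (hIJ : I ≤ J) (xs : List A)
    (hJ : J = I ⊔ Ideal.span {a : A | a ∈ xs})
    (hreg : RingTheory.Sequence.IsRegular (A ⧸ I) (xs.map (Ideal.Quotient.mk I))) :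
    ∀ n : ℕ, 1 ≤ n → I ⊓ J ^ n = I * J ^ (n - 1) :=
  inf_pow_eq_mul_pow_pred_of_regular_sequence_general I J xs hJ hreg
end

section
/- For every integer n ≥ 2, the 2-adic valuation of the integer 2·C(2^{n+1} − 3, 2^n − 2) − 4·C(2^{n+1} − 4, 2^n − 3) equals n. -/
/-!
With `m = 2 ^ n - 2`, Pascal's rule and the symmetry `C(2m, m - 1) = C(2m, m + 1)` turn the
number into `2 * (C(2m, m) - C(2m, m + 1))`, twice the Catalan number `Cat(m)`. Since
`(m + 1) * Cat(m) = C(2m, m)` with `m + 1` odd, Kummer's theorem gives `v₂(Cat(m))` as the binary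
digit sum of `m = 2 * (2 ^ (n - 1) - 1)`, which is `n - 1`.
-/

open Nat

theorem Nat.digits_two_two_pow_sub_one (k : ℕ) : digits 2 (2 ^ k - 1) = List.replicate k 1 := by
  induction k with
  | zero => simp
  | succ k ih =>
    have h : 2 ^ (k + 1) - 1 = 1 + 2 * (2 ^ k - 1) := by
      have := Nat.one_le_two_pow (n := k)
      rw [pow_succ]; omega
    rw [h, digits_add 2 one_lt_two 1 _ one_lt_two (Or.inl one_ne_zero), ih, List.replicate_succ]

theorem Nat.sum_digits_two_two_mul (m : ℕ) : (digits 2 (2 * m)).sum = (digits 2 m).sum := by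
  rcases m.eq_zero_or_pos with rfl | hm
  · simp
  · simp [digits_base_mul one_lt_two hm]

theorem Nat.padicValNat_two_centralBinom (m : ℕ) :
    padicValNat 2 (centralBinom m) = (digits 2 m).sum := by
  have := sub_one_mul_padicValNat_choose_eq_sub_sum_digits' (p := 2) (k := m) (n := m)
  rw [← two_mul, sum_digits_two_two_mul] at this
  simpa [centralBinom] using this

theorem Nat.catalan_ne_zero (m : ℕ) : catalan m ≠ 0 :=
  right_ne_zero_of_mul (succ_mul_catalan_eq_centralBinom m ▸ centralBinom_ne_zero m)

theorem Nat.padicValNat_two_catalan_add_padicValNat_two_succ (m : ℕ) :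
    padicValNat 2 (catalan m) + padicValNat 2 (m + 1) = (digits 2 m).sum := by
  rw [← padicValNat_two_centralBinom, ← succ_mul_catalan_eq_centralBinom,
    padicValNat.mul (succ_ne_zero m) (catalan_ne_zero m), add_comm]

theorem Nat.catalan_eq_centralBinom_sub_choose (m : ℕ) :
    (catalan m : ℤ) = centralBinom m - choose (2 * m) (m + 1) := by
  have hpascal : choose (2 * m) (m + 1) * (m + 1) = centralBinom m * m := by
    rw [choose_succ_right_eq, centralBinom, two_mul, Nat.add_sub_cancel]
  have hcat : ((m : ℤ) + 1) * catalan m = centralBinom m := by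
    exact_mod_cast succ_mul_catalan_eq_centralBinom m
  apply mul_left_cancel₀ (by positivity : (m : ℤ) + 1 ≠ 0)
  linear_combination hcat + (by exact_mod_cast hpascal :
    (choose (2 * m) (m + 1) : ℤ) * (m + 1) = centralBinom m * m)

theorem Nat.choose_sub_two_mul_choose_eq_catalan (m : ℕ) :
    (choose (2 * m + 3) (m + 1) : ℤ) - 2 * choose (2 * m + 2) m = catalan (m + 1) := by
  rw [catalan_eq_centralBinom_sub_choose, centralBinom,
    show 2 * m + 3 = (2 * m + 2) + 1 by ring, choose_succ_succ',
    show 2 * (m + 1) = 2 * m + 2 by ring,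
    choose_symm_of_eq_add (show 2 * m + 2 = m + (m + 1 + 1) by ring)]
  push_cast
  ring

theorem Nat.padicValNat_two_catalan_two_pow_sub_two (k : ℕ) :
    padicValNat 2 (catalan (2 ^ (k + 1) - 2)) = k := by
  have hpow := Nat.one_le_two_pow (n := k)
  have hm : 2 ^ (k + 1) - 2 = 2 * (2 ^ k - 1) := by rw [pow_succ]; omega
  have hodd : padicValNat 2 (2 ^ (k + 1) - 2 + 1) = 0 :=
    padicValNat.eq_zero_of_not_dvd (by rw [hm]; omega)
  have := padicValNat_two_catalan_add_padicValNat_two_succ (2 ^ (k + 1) - 2)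
  rwa [hodd, add_zero, hm, sum_digits_two_two_mul, digits_two_two_pow_sub_one,
    List.sum_replicate, smul_eq_mul, mul_one, ← hm] at this

/-- For every `n ≥ 2`, the 2-adic valuation of the integer
`2 * C(2^(n+1) - 3, 2^n - 2) - 4 * C(2^(n+1) - 4, 2^n - 3)` equals `n`. -/
theorem padicValInt_two_involution_variety_segre_number (n : ℕ) (hn : 2 ≤ n) :
    padicValInt 2
        (2 * (Nat.choose (2 ^ (n + 1) - 3) (2 ^ n - 2) : ℤ) -
          4 * (Nat.choose (2 ^ (n + 1) - 4) (2 ^ n - 3) : ℤ)) = n := by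
  obtain ⟨k, rfl⟩ : ∃ k, n = k + 1 := ⟨n - 1, by omega⟩
  set j := 2 ^ (k + 1) - 3
  have h4 : 4 ≤ 2 ^ (k + 1) := by
    simpa using Nat.pow_le_pow_right two_pos hn
  have hexpr : 2 * (Nat.choose (2 ^ (k + 1 + 1) - 3) (2 ^ (k + 1) - 2) : ℤ) -
      4 * (Nat.choose (2 ^ (k + 1 + 1) - 4) (2 ^ (k + 1) - 3) : ℤ) =
      ((2 * catalan (2 ^ (k + 1) - 2) : ℕ) : ℤ) := by
    rw [pow_succ 2 (k + 1), show 2 ^ (k + 1) * 2 - 3 = 2 * j + 3 by omega,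
      show 2 ^ (k + 1) - 2 = j + 1 by omega, show 2 ^ (k + 1) * 2 - 4 = 2 * j + 2 by omega]
    push_cast
    rw [← choose_sub_two_mul_choose_eq_catalan]
    ring
  rw [hexpr, padicValInt.of_nat, padicValNat.mul two_ne_zero (catalan_ne_zero _),
    padicValNat.self one_lt_two, padicValNat_two_catalan_two_pow_sub_two, add_comm]
end
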